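/- Let A be an m×n matrix of rank r with thin SVD A = U_rΣ_rV_r*, E any m×n matrix, and let Ã = [[0,A],[A*,0]], Ẽ = [[0,E],[E*,0]] be the Jordan–Wielandt matrices. With P̃ the polar factor of Ã, one has ‖(P̃^{1/2})⁺ Ẽ (P̃^{1/2})⁺‖₂ = ‖V_rΣ_r^{-1/2}U_r* E V_rΣ_r^{-1/2}U_r*‖₂. -/

import Mathlib

open Matrix
open scoped ComplexOrder

/-- The spectral norm (operator 2-norm) of a complex matrix. -/
noncomputable def specNorm {m n : Type*} [Fintype m] [Fintype n] [DecidableEq n]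
    (A : Matrix m n ℂ) : ℝ :=
  ‖LinearMap.toContinuousLinearMap (Matrix.toEuclideanLin A)‖

/-- `B` is the Moore–Penrose pseudoinverse of `A` (the four Penrose conditions). -/
def IsMP {m n : Type*} [Fintype m] [Fintype n]
    (A : Matrix m n ℂ) (B : Matrix n m ℂ) : Prop :=
  A * B * A = A ∧ B * A * B = B ∧ (A * B)ᴴ = A * B ∧ (B * A)ᴴ = B * A

open scoped Matrix.Norms.L2Operator

section NormLemmas

lemma specNorm_eq_l2 {m n : Type*} [Fintype m] [Fintype n] [DecidableEq n] (A : Matrix m n ℂ) :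
    specNorm A = ‖A‖ := rfl

lemma norm_mul_left_iso {k m n : Type*} [Fintype k] [Fintype m] [Fintype n]
    [DecidableEq k] [DecidableEq n]
    {U : Matrix m k ℂ} (hU : Uᴴ * U = 1) (M : Matrix k n ℂ) : ‖U * M‖ = ‖M‖ := by
  have h : ‖U * M‖ * ‖U * M‖ = ‖M‖ * ‖M‖ := by
    rw [← l2_opNorm_conjTranspose_mul_self (U * M), ← l2_opNorm_conjTranspose_mul_self M,
      conjTranspose_mul]
    congr 1
    calc Mᴴ * Uᴴ * (U * M) = Mᴴ * ((Uᴴ * U) * M) := by simp only [Matrix.mul_assoc]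
    _ = Mᴴ * M := by rw [hU, Matrix.one_mul]
  exact (mul_self_inj (norm_nonneg _) (norm_nonneg _)).mp h

lemma norm_mul_right_iso {k m n : Type*} [Fintype k] [Fintype m] [Fintype n]
    [DecidableEq k] [DecidableEq m] [DecidableEq n]
    {V : Matrix n k ℂ} (hV : Vᴴ * V = 1) (M : Matrix m k ℂ) : ‖M * Vᴴ‖ = ‖M‖ := by
  rw [← l2_opNorm_conjTranspose (M * Vᴴ), conjTranspose_mul, conjTranspose_conjTranspose,
    norm_mul_left_iso hV, l2_opNorm_conjTranspose]

lemma norm_iso_sandwich {k l m n : Type*} [Fintype k] [Fintype l] [Fintype m] [Fintype n]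
    [DecidableEq k] [DecidableEq l] [DecidableEq m] [DecidableEq n]
    {U : Matrix m k ℂ} {V : Matrix n l ℂ} (hU : Uᴴ * U = 1) (hV : Vᴴ * V = 1)
    (M : Matrix k l ℂ) : ‖U * M * Vᴴ‖ = ‖M‖ := by
  rw [Matrix.mul_assoc, norm_mul_left_iso hU, norm_mul_right_iso hV]

lemma eu_norm_sq {ι : Type*} [Fintype ι] (v : EuclideanSpace ℂ ι) :
    ‖v‖ ^ 2 = ∑ i, ‖v i‖ ^ 2 := by
  rw [EuclideanSpace.norm_eq, Real.sq_sqrt (by positivity)]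

lemma eu_norm_sum_elim_sq {m n : Type*} [Fintype m] [Fintype n]
    (a : m → ℂ) (b : n → ℂ) :
    ‖(WithLp.toLp 2 (Sum.elim a b) : EuclideanSpace ℂ (m ⊕ n))‖ ^ 2
      = ‖(WithLp.toLp 2 a : EuclideanSpace ℂ m)‖ ^ 2
        + ‖(WithLp.toLp 2 b : EuclideanSpace ℂ n)‖ ^ 2 := by
  rw [eu_norm_sq, eu_norm_sq, eu_norm_sq, Fintype.sum_sum_type]
  rfl

lemma norm_jordan {m n : Type*} [Fintype m] [Fintype n] [DecidableEq m] [DecidableEq n]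
    (X : Matrix m n ℂ) :
    ‖fromBlocks (0 : Matrix m m ℂ) X Xᴴ (0 : Matrix n n ℂ)‖ = ‖X‖ := by
  apply le_antisymm
  · rw [l2_opNorm_def]
    refine ContinuousLinearMap.opNorm_le_bound _ (norm_nonneg X) fun v => ?_
    set x : m → ℂ := fun i => v (Sum.inl i) with hx
    set y : n → ℂ := fun j => v (Sum.inr j) with hy
    have hv : v = (WithLp.toLp 2 (Sum.elim x y) : EuclideanSpace ℂ (m ⊕ n)) := by
      ext i; cases i <;> rfl
    rw [hv]
    show ‖(WithLp.toLp 2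
        ((fromBlocks (0 : Matrix m m ℂ) X Xᴴ (0 : Matrix n n ℂ)) *ᵥ Sum.elim x y) :
          EuclideanSpace ℂ (m ⊕ n))‖
      ≤ ‖X‖ * ‖(WithLp.toLp 2 (Sum.elim x y) : EuclideanSpace ℂ (m ⊕ n))‖
    rw [fromBlocks_mulVec]
    simp only [zero_mulVec, zero_add, add_zero]
    have h1 : ‖(WithLp.toLp 2 (X *ᵥ y) : EuclideanSpace ℂ m)‖
        ≤ ‖X‖ * ‖(WithLp.toLp 2 y : EuclideanSpace ℂ n)‖ := X.l2_opNorm_mulVec (WithLp.toLp 2 y)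
    have h2 : ‖(WithLp.toLp 2 (Xᴴ *ᵥ x) : EuclideanSpace ℂ n)‖
        ≤ ‖X‖ * ‖(WithLp.toLp 2 x : EuclideanSpace ℂ m)‖ := by
      have := Xᴴ.l2_opNorm_mulVec (WithLp.toLp 2 x)
      rwa [l2_opNorm_conjTranspose] at this
    have hXn : (0:ℝ) ≤ ‖X‖ := norm_nonneg X
    have hsq : ‖(WithLp.toLp 2 (Sum.elim (X *ᵥ y) (Xᴴ *ᵥ x)) : EuclideanSpace ℂ (m ⊕ n))‖ ^ 2
        ≤ (‖X‖ * ‖(WithLp.toLp 2 (Sum.elim x y) : EuclideanSpace ℂ (m ⊕ n))‖) ^ 2 := by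
      rw [eu_norm_sum_elim_sq, mul_pow, eu_norm_sum_elim_sq]
      nlinarith [norm_nonneg (WithLp.toLp 2 (X *ᵥ y) : EuclideanSpace ℂ m),
        norm_nonneg (WithLp.toLp 2 (Xᴴ *ᵥ x) : EuclideanSpace ℂ n),
        norm_nonneg (WithLp.toLp 2 x : EuclideanSpace ℂ m),
        norm_nonneg (WithLp.toLp 2 y : EuclideanSpace ℂ n)]
    have h := Real.sqrt_le_sqrt hsq
    rwa [Real.sqrt_sq (norm_nonneg _), Real.sqrt_sq (by positivity)] at h
  · rw [l2_opNorm_def X]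
    refine ContinuousLinearMap.opNorm_le_bound _ (norm_nonneg _) fun y => ?_
    show ‖(WithLp.toLp 2 (X *ᵥ y.ofLp) : EuclideanSpace ℂ m)‖
      ≤ ‖fromBlocks (0 : Matrix m m ℂ) X Xᴴ (0 : Matrix n n ℂ)‖ * ‖y‖
    set w : EuclideanSpace ℂ (m ⊕ n) := WithLp.toLp 2 (Sum.elim (0 : m → ℂ) y.ofLp)
      with hw
    have hNw : (WithLp.toLp 2
        ((fromBlocks (0 : Matrix m m ℂ) X Xᴴ (0 : Matrix n n ℂ)) *ᵥ w.ofLp) :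
          EuclideanSpace ℂ (m ⊕ n))
        = (WithLp.toLp 2 (Sum.elim (X *ᵥ y.ofLp) 0) : EuclideanSpace ℂ (m ⊕ n)) := by
      rw [hw]
      show WithLp.toLp 2 ((fromBlocks (0 : Matrix m m ℂ) X Xᴴ (0 : Matrix n n ℂ)) *ᵥ
          (Sum.elim 0 y.ofLp)) = WithLp.toLp 2 (Sum.elim (X *ᵥ y.ofLp) 0)
      rw [fromBlocks_mulVec]
      simp
    have h1 : ‖(WithLp.toLp 2 (X *ᵥ y.ofLp) : EuclideanSpace ℂ m)‖
        = ‖(WithLp.toLp 2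
          ((fromBlocks (0 : Matrix m m ℂ) X Xᴴ (0 : Matrix n n ℂ)) *ᵥ w.ofLp) :
            EuclideanSpace ℂ (m ⊕ n))‖ := by
      have hs : ‖(WithLp.toLp 2 (X *ᵥ y.ofLp) : EuclideanSpace ℂ m)‖ ^ 2
          = ‖(WithLp.toLp 2
            ((fromBlocks (0 : Matrix m m ℂ) X Xᴴ (0 : Matrix n n ℂ)) *ᵥ w.ofLp) :
              EuclideanSpace ℂ (m ⊕ n))‖ ^ 2 := by
        rw [hNw, eu_norm_sum_elim_sq]
        simp
      have h := congrArg Real.sqrt hs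
      rwa [Real.sqrt_sq (norm_nonneg _), Real.sqrt_sq (norm_nonneg _)] at h
    have h2 : ‖w‖ = ‖y‖ := by
      have hs : ‖w‖ ^ 2 = ‖y‖ ^ 2 := by
        rw [hw, eu_norm_sum_elim_sq]
        simp
      have h := congrArg Real.sqrt hs
      rwa [Real.sqrt_sq (norm_nonneg _), Real.sqrt_sq (norm_nonneg _)] at h
    rw [h1, ← h2]
    exact (fromBlocks (0 : Matrix m m ℂ) X Xᴴ (0 : Matrix n n ℂ)).l2_opNorm_mulVec w

end NormLemmas

lemma isMP_unique {m n : Type*} [Fintype m] [Fintype n] {A : Matrix m n ℂ}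
    {B₁ B₂ : Matrix n m ℂ} (h1 : IsMP A B₁) (h2 : IsMP A B₂) : B₁ = B₂ := by
  obtain ⟨ha1, hb1, hc1, hd1⟩ := h1
  obtain ⟨ha2, hb2, hc2, hd2⟩ := h2
  have hAB : A * B₁ = A * B₂ := by
    calc A * B₁ = (A * B₁)ᴴ := hc1.symm
    _ = B₁ᴴ * Aᴴ := by rw [conjTranspose_mul]
    _ = B₁ᴴ * (A * B₂ * A)ᴴ := by rw [ha2]
    _ = (A * B₁)ᴴ * (A * B₂)ᴴ := by
        simp only [conjTranspose_mul, Matrix.mul_assoc]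
    _ = (A * B₁) * (A * B₂) := by rw [hc1, hc2]
    _ = (A * B₁ * A) * B₂ := by simp only [Matrix.mul_assoc]
    _ = A * B₂ := by rw [ha1]
  have hBA : B₁ * A = B₂ * A := by
    calc B₁ * A = (B₁ * A)ᴴ := hd1.symm
    _ = Aᴴ * B₁ᴴ := by rw [conjTranspose_mul]
    _ = (A * B₂ * A)ᴴ * B₁ᴴ := by rw [ha2]
    _ = (B₂ * A)ᴴ * (B₁ * A)ᴴ := by
        simp only [conjTranspose_mul, Matrix.mul_assoc]
    _ = (B₂ * A) * (B₁ * A) := by rw [hd1, hd2]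
    _ = B₂ * (A * B₁ * A) := by simp only [Matrix.mul_assoc]
    _ = B₂ * A := by rw [ha1]
  calc B₁ = B₁ * A * B₁ := hb1.symm
  _ = B₂ * A * B₁ := by rw [hBA]
  _ = B₂ * (A * B₁) := by rw [Matrix.mul_assoc]
  _ = B₂ * (A * B₂) := by rw [hAB]
  _ = B₂ * A * B₂ := by rw [Matrix.mul_assoc]
  _ = B₂ := hb2

open scoped MatrixOrder in
lemma psd_eq_of_sq_eq_sq {ι : Type*} [Fintype ι] [DecidableEq ι] {X Y : Matrix ι ι ℂ}
    (hX : X.PosSemidef) (hY : Y.PosSemidef) (h : X ^ 2 = Y ^ 2) : X = Y := by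
  rw [← CFC.sqrt_sq X hX.nonneg, ← CFC.sqrt_sq Y hY.nonneg, h]

section BlockDiag
variable {m n r : ℕ}
variable (Ur : Matrix (Fin m) (Fin r) ℂ) (Vr : Matrix (Fin n) (Fin r) ℂ)

/-- A block-diagonal "sandwich" matrix `diag(Ur D Urᴴ, Vr D Vrᴴ)` with `D = diagonal f`. -/
noncomputable def bd (f : Fin r → ℝ) : Matrix (Fin m ⊕ Fin n) (Fin m ⊕ Fin n) ℂ :=
  fromBlocks (Ur * diagonal (fun i => (f i : ℂ)) * Urᴴ) 0 0
    (Vr * diagonal (fun i => (f i : ℂ)) * Vrᴴ)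

lemma bd_eq (f : Fin r → ℝ) :
    bd Ur Vr f = (fromBlocks Ur 0 0 Vr) *
      diagonal (Sum.elim (fun i => (f i : ℂ)) (fun i => (f i : ℂ))) *
      (fromBlocks Ur 0 0 Vr)ᴴ := by
  rw [← fromBlocks_diagonal, fromBlocks_conjTranspose, fromBlocks_multiply, fromBlocks_multiply]
  simp [bd]

lemma bd_psd (f : Fin r → ℝ) (hf : ∀ i, 0 ≤ f i) : (bd Ur Vr f).PosSemidef := by
  rw [bd_eq]
  refine PosSemidef.mul_mul_conjTranspose_same ?_ _
  refine posSemidef_diagonal_iff.mpr fun i => ?_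
  rcases i with i | i <;> simpa using Complex.zero_le_real.mpr (hf i)

lemma sandwich_mul {k : ℕ} {U : Matrix (Fin k) (Fin r) ℂ} (hU : Uᴴ * U = 1)
    (D1 D2 : Matrix (Fin r) (Fin r) ℂ) :
    (U * D1 * Uᴴ) * (U * D2 * Uᴴ) = U * (D1 * D2) * Uᴴ := by
  calc (U * D1 * Uᴴ) * (U * D2 * Uᴴ) = U * D1 * ((Uᴴ * U) * (D2 * Uᴴ)) := by
        simp only [Matrix.mul_assoc]
  _ = U * (D1 * (D2 * Uᴴ)) := by rw [hU, Matrix.one_mul, Matrix.mul_assoc]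
  _ = U * (D1 * D2) * Uᴴ := by simp only [Matrix.mul_assoc]

lemma bd_mul (hUr : Urᴴ * Ur = 1) (hVr : Vrᴴ * Vr = 1) (f g : Fin r → ℝ) :
    bd Ur Vr f * bd Ur Vr g = bd Ur Vr (fun i => f i * g i) := by
  simp only [bd, fromBlocks_multiply, Matrix.mul_zero, Matrix.zero_mul, add_zero, zero_add,
    sandwich_mul hUr, sandwich_mul hVr, diagonal_mul_diagonal, Complex.ofReal_mul]

lemma cancel_mid {p q k l : Type*} [Fintype k] [Fintype l] [Fintype p] [DecidableEq l]
    {V : Matrix k l ℂ} (hV : Vᴴ * V = 1) (X : Matrix p l ℂ) (Y : Matrix l q ℂ) :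
    X * Vᴴ * (V * Y) = X * Y := by
  rw [Matrix.mul_assoc, ← Matrix.mul_assoc Vᴴ, hV, Matrix.one_mul]

lemma star_real_fun (f : Fin r → ℝ) :
    star (fun i => ((f i : ℂ))) = fun i => ((f i : ℂ)) := by
  funext i
  simp [Complex.conj_ofReal]

lemma conjT_svd (f : Fin r → ℝ) :
    (Ur * diagonal (fun i => (f i : ℂ)) * Vrᴴ)ᴴ = Vr * diagonal (fun i => (f i : ℂ)) * Urᴴ := by
  rw [conjTranspose_mul, conjTranspose_mul, conjTranspose_conjTranspose,
    diagonal_conjTranspose, star_real_fun, Matrix.mul_assoc]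

end BlockDiag


section Cross
variable {r : ℕ}

lemma cross_sandwich {k l p : ℕ} {V : Matrix (Fin p) (Fin r) ℂ} (hV : Vᴴ * V = 1)
    (U : Matrix (Fin k) (Fin r) ℂ) (W : Matrix (Fin l) (Fin r) ℂ)
    (D1 D2 : Matrix (Fin r) (Fin r) ℂ) :
    (U * D1 * Vᴴ) * (V * D2 * Wᴴ) = U * (D1 * D2) * Wᴴ := by
  calc (U * D1 * Vᴴ) * (V * D2 * Wᴴ) = U * D1 * ((Vᴴ * V) * (D2 * Wᴴ)) := by
        simp only [Matrix.mul_assoc]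
  _ = U * (D1 * (D2 * Wᴴ)) := by rw [hV, Matrix.one_mul, Matrix.mul_assoc]
  _ = U * (D1 * D2) * Wᴴ := by simp only [Matrix.mul_assoc]

lemma bd_herm {m n : ℕ} (Ur : Matrix (Fin m) (Fin r) ℂ) (Vr : Matrix (Fin n) (Fin r) ℂ)
    (f : Fin r → ℝ) : (bd Ur Vr f)ᴴ = bd Ur Vr f := by
  simp only [bd, fromBlocks_conjTranspose, conjTranspose_zero, conjT_svd]

end Cross

/-- (39) in Theorem 4.1.  `A` an `m × n` matrix of rank `r` with
thin SVD `A = U_r Σ_r V_rᴴ`, `E` any `m × n` matrix, `Ã = [[0,A],[Aᴴ,0]]` and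
`Ẽ = [[0,E],[Eᴴ,0]]` the Jordan–Wielandt matrices, `P̃` the positive semi-definite
polar factor of `Ã` (`P̃² = Ã²`), `Q = P̃^{1/2}` its positive semi-definite square
root and `B = Q⁺`.  Then `‖(P̃^{1/2})⁺ Ẽ (P̃^{1/2})⁺‖₂ =
‖V_rΣ_r^{-1/2}U_rᴴ E V_rΣ_r^{-1/2}U_rᴴ‖₂`. -/
theorem stmt18 (m n r : ℕ) (hrm : r ≤ m) (hrn : r ≤ n)
    (A E : Matrix (Fin m) (Fin n) ℂ)
    (Ur : Matrix (Fin m) (Fin r) ℂ) (Vr : Matrix (Fin n) (Fin r) ℂ)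
    (σ : Fin r → ℝ) (hσpos : ∀ i, 0 < σ i) (hσ : Antitone σ)
    (hUr : Urᴴ * Ur = 1) (hVr : Vrᴴ * Vr = 1)
    (hA : A = Ur * Matrix.diagonal (fun i => (σ i : ℂ)) * Vrᴴ)
    (Pt Q B : Matrix (Fin m ⊕ Fin n) (Fin m ⊕ Fin n) ℂ)
    (hPt : Pt.PosSemidef)
    (hPtsq : Pt * Pt =
      Matrix.fromBlocks 0 A Aᴴ (0 : Matrix (Fin n) (Fin n) ℂ) *
        Matrix.fromBlocks 0 A Aᴴ (0 : Matrix (Fin n) (Fin n) ℂ))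
    (hQ : Q.PosSemidef) (hQsq : Q * Q = Pt)
    (hB : IsMP Q B) :
    specNorm (B * Matrix.fromBlocks 0 E Eᴴ (0 : Matrix (Fin n) (Fin n) ℂ) * B) =
    specNorm ((Vr * Matrix.diagonal (fun i => ((Real.sqrt (σ i))⁻¹ : ℂ)) * Urᴴ) * E *
      (Vr * Matrix.diagonal (fun i => ((Real.sqrt (σ i))⁻¹ : ℂ)) * Urᴴ)) := by
  classical
  have hAH : Aᴴ = Vr * diagonal (fun i => (σ i : ℂ)) * Urᴴ := by
    rw [hA, conjT_svd]
  -- square of the Jordan–Wielandt matrix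
  have hAsq : Matrix.fromBlocks 0 A Aᴴ (0 : Matrix (Fin n) (Fin n) ℂ) *
      Matrix.fromBlocks 0 A Aᴴ (0 : Matrix (Fin n) (Fin n) ℂ)
      = bd Ur Vr (fun i => σ i * σ i) := by
    rw [fromBlocks_multiply]
    simp only [Matrix.mul_zero, Matrix.zero_mul, zero_add, add_zero]
    have h1 : A * Aᴴ = Ur * diagonal (fun i => ((σ i * σ i : ℝ) : ℂ)) * Urᴴ := by
      rw [hAH, hA, cross_sandwich hVr, diagonal_mul_diagonal]
      simp only [Complex.ofReal_mul]
    have h2 : Aᴴ * A = Vr * diagonal (fun i => ((σ i * σ i : ℝ) : ℂ)) * Vrᴴ := by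
      rw [hAH, hA, cross_sandwich hUr, diagonal_mul_diagonal]
      simp only [Complex.ofReal_mul]
    rw [h1, h2]
    rfl
  -- identify Pt
  have hPtP0 : Pt = bd Ur Vr σ := by
    refine psd_eq_of_sq_eq_sq hPt (bd_psd Ur Vr σ fun i => (hσpos i).le) ?_
    rw [pow_two, pow_two, hPtsq, hAsq, bd_mul Ur Vr hUr hVr]
  -- identify Q
  have hsq_self : (fun i => Real.sqrt (σ i) * Real.sqrt (σ i)) = σ :=
    funext fun i => Real.mul_self_sqrt (hσpos i).le
  have hQ0sq : bd Ur Vr (fun i => Real.sqrt (σ i)) * bd Ur Vr (fun i => Real.sqrt (σ i))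
      = bd Ur Vr σ := by
    rw [bd_mul Ur Vr hUr hVr, hsq_self]
  have hQQ0 : Q = bd Ur Vr (fun i => Real.sqrt (σ i)) := by
    refine psd_eq_of_sq_eq_sq hQ (bd_psd Ur Vr _ fun i => (Real.sqrt_nonneg _)) ?_
    rw [pow_two, pow_two, hQsq, hPtP0, hQ0sq]
  -- identify B as the pseudoinverse
  have hsne : ∀ i, Real.sqrt (σ i) ≠ 0 := fun i => (Real.sqrt_pos.mpr (hσpos i)).ne'
  have hMP0 : IsMP (bd Ur Vr (fun i => Real.sqrt (σ i)))
      (bd Ur Vr (fun i => (Real.sqrt (σ i))⁻¹)) := by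
    refine ⟨?_, ?_, ?_, ?_⟩
    · rw [bd_mul Ur Vr hUr hVr, bd_mul Ur Vr hUr hVr]
      have : (fun i => Real.sqrt (σ i) * (Real.sqrt (σ i))⁻¹ * Real.sqrt (σ i))
          = fun i => Real.sqrt (σ i) := by
        funext i; field_simp
      rw [this]
    · rw [bd_mul Ur Vr hUr hVr, bd_mul Ur Vr hUr hVr]
      have : (fun i => (Real.sqrt (σ i))⁻¹ * Real.sqrt (σ i) * (Real.sqrt (σ i))⁻¹)
          = fun i => (Real.sqrt (σ i))⁻¹ := by
        funext i
        rw [inv_mul_cancel₀ (hsne i), one_mul]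
      rw [this]
    · rw [bd_mul Ur Vr hUr hVr, bd_herm]
    · rw [bd_mul Ur Vr hUr hVr, bd_herm]
  have hBB0 : B = bd Ur Vr (fun i => (Real.sqrt (σ i))⁻¹) := by
    rw [hQQ0] at hB
    exact isMP_unique hB hMP0
  -- compute B * Ẽ * B
  set T : Matrix (Fin r) (Fin r) ℂ :=
    diagonal (fun i => (((Real.sqrt (σ i))⁻¹ : ℝ) : ℂ)) with hT
  have hTH : Tᴴ = T := by
    rw [hT, diagonal_conjTranspose, star_real_fun]
  set X : Matrix (Fin m) (Fin n) ℂ := (Ur * T * Urᴴ) * E * (Vr * T * Vrᴴ) with hX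
  have hXH : Xᴴ = (Vr * T * Vrᴴ) * Eᴴ * (Ur * T * Urᴴ) := by
    rw [hX]
    simp only [conjTranspose_mul, conjTranspose_conjTranspose, hTH, Matrix.mul_assoc]
  have hBEB : B * Matrix.fromBlocks 0 E Eᴴ (0 : Matrix (Fin n) (Fin n) ℂ) * B
      = fromBlocks 0 X Xᴴ 0 := by
    rw [hBB0, hXH]
    simp only [bd, fromBlocks_multiply, Matrix.mul_zero, Matrix.zero_mul, zero_add, add_zero,
      hX, hT, Matrix.mul_assoc]
  rw [specNorm_eq_l2, specNorm_eq_l2, hBEB, norm_jordan]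
  have hconv : (fun i => ((Real.sqrt (σ i))⁻¹ : ℂ))
      = (fun i => (((Real.sqrt (σ i))⁻¹ : ℝ) : ℂ)) := by
    funext i
    rw [Complex.ofReal_inv]
  have e1 : X = Ur * (T * Urᴴ * E * Vr * T) * Vrᴴ := by
    rw [hX]; simp only [Matrix.mul_assoc]
  have e2 : (Vr * Matrix.diagonal (fun i => ((Real.sqrt (σ i))⁻¹ : ℂ)) * Urᴴ) * E *
      (Vr * Matrix.diagonal (fun i => ((Real.sqrt (σ i))⁻¹ : ℂ)) * Urᴴ)
      = Vr * (T * Urᴴ * E * Vr * T) * Urᴴ := by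
    rw [hconv, ← hT]; simp only [Matrix.mul_assoc]
  rw [e1, norm_iso_sandwich hUr hVr, e2, norm_iso_sandwich hVr hUr]
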